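/- arXiv:1008.2248 — 2 statements merged into one kernel-verified Lean document; each statement's English description precedes it below -/
import Mathlib

section
/- Let ν > 0 be small and define ψ_ν(x,z) = (cosh z)^{-θ} + ν(cosh(x/2) + cosh(z/2)) for fixed 0 < θ ≤ 1/√2. Then (Δ − 1)ψ_ν ≤ −(1/4)ψ_ν pointwise on ℝ², i.e., ψ_ν is a positive supersolution of the operator Δ − 1 + 1/4. -/
/-!
Write `ψ_ν(x, z) = a(x) + b(z)`. Since `cosh² = 1 + sinh²`, the second derivative of
`cosh ^ p` is `p² cosh ^ p - p (p - 1) cosh ^ (p - 2)`, which for `p = -θ` is at most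
`θ² (cosh z) ^ (-θ) ≤ (1/2) (cosh z) ^ (-θ)`, while `cosh (t / 2)'' = cosh (t / 2) / 4`.
Hence `(Δ - 1) ψ_ν ≤ -(1/2) (cosh z) ^ (-θ) - (3/4) ν (cosh (x/2) + cosh (z/2)) ≤ -(1/4) ψ_ν`.
-/

open Real

/-- The Laplacian on ℝ², computed variable by variable. -/
noncomputable def lap (u : ℝ → ℝ → ℝ) (x z : ℝ) : ℝ :=
  deriv (deriv fun x' => u x' z) x + deriv (deriv fun z' => u x z') z

theorem lap_eq_of_eq_add {u : ℝ → ℝ → ℝ} (a b : ℝ → ℝ) (hu : ∀ x z, u x z = a x + b z)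
    (x z : ℝ) : lap u x z = deriv (deriv a) x + deriv (deriv b) z := by
  obtain rfl : u = fun x z => a x + b z := funext₂ hu
  simp only [lap, deriv_add_const', deriv_const_add']

theorem deriv_deriv_eq_of_hasDerivAt {f f' : ℝ → ℝ} {a x : ℝ}
    (hf : ∀ t, HasDerivAt f (f' t) t) (hf' : HasDerivAt f' a x) : deriv (deriv f) x = a := by
  rw [show deriv f = f' from funext fun t => (hf t).deriv]
  exact hf'.deriv

theorem hasDerivAt_cosh_rpow (p t : ℝ) :
    HasDerivAt (fun s => cosh s ^ p) (p * cosh t ^ (p - 1) * sinh t) t := by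
  convert (hasDerivAt_cosh t).rpow_const (p := p) (Or.inl (cosh_pos t).ne') using 1
  ring

theorem hasDerivAt_mul_cosh_rpow_sub_one_mul_sinh (p t : ℝ) :
    HasDerivAt (fun s => p * cosh s ^ (p - 1) * sinh s)
      (p ^ 2 * cosh t ^ p - p * (p - 1) * cosh t ^ (p - 2)) t := by
  have hc := cosh_pos t
  have hp : cosh t ^ p = cosh t ^ (p - 2) * cosh t ^ 2 := by
    rw [← rpow_natCast, ← rpow_add hc]; norm_num
  have hp1 : cosh t ^ (p - 1) = cosh t ^ (p - 2) * cosh t := by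
    rw [← rpow_add_one hc.ne']; ring_nf
  have hp2 : cosh t ^ (p - 1 - 1) = cosh t ^ (p - 2) := by ring_nf
  refine (((hasDerivAt_cosh_rpow (p - 1) t).const_mul p).mul (hasDerivAt_sinh t)).congr_deriv ?_
  rw [hp, hp1, hp2]
  linear_combination -p * (p - 1) * cosh t ^ (p - 2) * cosh_sq t

theorem hasDerivAt_cosh_div (c t : ℝ) :
    HasDerivAt (fun s => cosh (s / c)) (sinh (t / c) / c) t :=
  (((hasDerivAt_id t).div_const c).cosh).congr_deriv (by simp only [id]; ring)

theorem hasDerivAt_sinh_div_div (c t : ℝ) :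
    HasDerivAt (fun s => sinh (s / c) / c) (cosh (t / c) / c ^ 2) t :=
  ((((hasDerivAt_id t).div_const c).sinh).div_const c).congr_deriv (by simp only [id]; ring)

theorem sq_le_half_of_le_inv_sqrt_two {θ : ℝ} (hθ0 : 0 ≤ θ) (hθ : θ ≤ 1 / √2) :
    θ ^ 2 ≤ 1 / 2 := by
  calc θ ^ 2 ≤ (1 / √2) ^ 2 := pow_le_pow_left₀ hθ0 hθ 2
    _ = 1 / 2 := by rw [div_pow, sq_sqrt zero_le_two, one_pow]

/-- ψ_ν is a positive supersolution of Δ - 1 + 1/4. -/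
theorem stmt15 (θ ν : ℝ) (hθ0 : 0 < θ) (hθ : θ ≤ 1 / Real.sqrt 2) (hν : 0 < ν)
    (ψ : ℝ → ℝ → ℝ)
    (hψ : ∀ x z, ψ x z =
      Real.cosh z ^ (-θ) + ν * (Real.cosh (x / 2) + Real.cosh (z / 2))) :
    ∀ x z, 0 < ψ x z ∧ lap ψ x z - ψ x z ≤ -(1 / 4) * ψ x z := by
  intro x z
  have hcx := cosh_pos (x / 2)
  have hcz := cosh_pos (z / 2)
  have hf := rpow_pos_of_pos (cosh_pos z) (-θ)
  have hF := rpow_pos_of_pos (cosh_pos z) (-θ - 2)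
  have hlap : lap ψ x z = ν * (cosh (x / 2) / 2 ^ 2) + ((-θ) ^ 2 * cosh z ^ (-θ)
      - -θ * (-θ - 1) * cosh z ^ (-θ - 2) + ν * (cosh (z / 2) / 2 ^ 2)) := by
    rw [lap_eq_of_eq_add (fun x => ν * cosh (x / 2))
      (fun z => cosh z ^ (-θ) + ν * cosh (z / 2)) (fun x z => by rw [hψ]; ring)]
    congr 1
    · exact deriv_deriv_eq_of_hasDerivAt (fun t => (hasDerivAt_cosh_div 2 t).const_mul ν)
        ((hasDerivAt_sinh_div_div 2 x).const_mul ν)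
    · exact deriv_deriv_eq_of_hasDerivAt
        (fun t => (hasDerivAt_cosh_rpow (-θ) t).add ((hasDerivAt_cosh_div 2 t).const_mul ν))
        ((hasDerivAt_mul_cosh_rpow_sub_one_mul_sinh (-θ) z).add
          ((hasDerivAt_sinh_div_div 2 z).const_mul ν))
  have hθ2 := sq_le_half_of_le_inv_sqrt_two hθ0.le hθ
  rw [hψ, hlap]
  refine ⟨by positivity, ?_⟩
  nlinarith [mul_le_mul_of_nonneg_right hθ2 hf.le, mul_pos (mul_pos hθ0 hθ0) hF,
    mul_pos hθ0 hF, mul_pos hν hcx, mul_pos hν hcz]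
end

section
/- Let σ ∈ (0,1) and R > 0 and let V : ℝ² → ℝ be continuous with 0 ≤ V(x) < (1−σ²)/2 for |x| ≥ R. Suppose φ is bounded, C², satisfies Δφ − φ + Vφ = 0 on {|x| > R}, and |φ| ≤ M e^{-σR} on {|x| = R}, and φ → 0 at infinity. Then |φ(x)| ≤ M e^{-σ|x|} for all |x| ≥ R. -/
/-!
The barrier `M e^{-σ r}`, `r = √(x² + z²)`, is a strict supersolution: its Laplacian is
`(σ² - σ/r) M e^{-σ r} ≤ σ² M e^{-σ r}`, whereas a solution `ψ` of `Δψ = (1 - V) ψ` lying above it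
has `Δψ > σ² ψ`, since `1 - V > σ²`. If `|φ|` exceeded the barrier somewhere on `r ≥ R`, then
`|φ|` minus the barrier, which is `≤ 0` on `r = R` and at infinity, would attain a positive
maximum in `r > R`; there `±φ` minus the barrier has a local maximum, hence a non-positive
Laplacian, which is impossible.
-/

open Set Topology

theorem deriv_deriv_nonpos_of_isLocalMax {g : ℝ → ℝ} {a : ℝ} (hmax : IsLocalMax g a)
    (hg : ContinuousAt g a) : deriv (deriv g) a ≤ 0 := by
  by_contra! hpos
  have hmin := isLocalMin_of_deriv_deriv_pos hpos hmax.deriv_eq_zero hg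
  have hconst : g =ᶠ[𝓝 a] fun _ => g a :=
    (hmax.and hmin).mono fun _ h => le_antisymm h.1 h.2
  rw [hconst.deriv.deriv_eq] at hpos
  simp at hpos

theorem deriv_deriv_sub {f g : ℝ → ℝ} {a : ℝ} (hf : ContDiffAt ℝ 2 f a)
    (hg : ContDiffAt ℝ 2 g a) :
    deriv (deriv fun t => f t - g t) a = deriv (deriv f) a - deriv (deriv g) a := by
  have hdiff : ∀ᶠ t in 𝓝 a, DifferentiableAt ℝ f t ∧ DifferentiableAt ℝ g t :=
    ((hf.eventually (by simp)).and (hg.eventually (by simp))).mono fun _ h =>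
      ⟨h.1.differentiableAt (by norm_num), h.2.differentiableAt (by norm_num)⟩
  have hderiv : deriv (fun t => f t - g t) =ᶠ[𝓝 a] fun t => deriv f t - deriv g t :=
    hdiff.mono fun _ h => deriv_sub h.1 h.2
  rw [hderiv.deriv_eq]
  exact deriv_sub ((hf.derivWithin (m := 1) (by norm_num)).differentiableAt one_ne_zero)
    ((hg.derivWithin (m := 1) (by norm_num)).differentiableAt one_ne_zero)

theorem lap_nonpos_of_isLocalMax {u : ℝ → ℝ → ℝ} {a b : ℝ}
    (hmax : IsLocalMax (fun p : ℝ × ℝ => u p.1 p.2) (a, b))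
    (hu : ContinuousAt (fun p : ℝ × ℝ => u p.1 p.2) (a, b)) : lap u a b ≤ 0 := by
  have hx : ContinuousAt (fun t : ℝ => (t, b)) a := by fun_prop
  have hz : ContinuousAt (fun t : ℝ => (a, t)) b := by fun_prop
  exact add_nonpos
    (deriv_deriv_nonpos_of_isLocalMax (hmax.comp_continuous (g := fun t => (t, b)) hx)
      (hu.comp (f := fun t => (t, b)) hx))
    (deriv_deriv_nonpos_of_isLocalMax (hmax.comp_continuous hz) (hu.comp hz))

theorem lap_sub {u v : ℝ → ℝ → ℝ} {a b : ℝ}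
    (hu : ContDiffAt ℝ 2 (fun p : ℝ × ℝ => u p.1 p.2) (a, b))
    (hv : ContDiffAt ℝ 2 (fun p : ℝ × ℝ => v p.1 p.2) (a, b)) :
    lap (fun x z => u x z - v x z) a b = lap u a b - lap v a b := by
  have hx : ContDiffAt ℝ 2 (fun t : ℝ => (t, b)) a := by fun_prop
  have hz : ContDiffAt ℝ 2 (fun t : ℝ => (a, t)) b := by fun_prop
  have hux : ContDiffAt ℝ 2 (fun t => u t b) a := (hu.comp a hx :)
  have hvx : ContDiffAt ℝ 2 (fun t => v t b) a := (hv.comp a hx :)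
  have huz : ContDiffAt ℝ 2 (fun t => u a t) b := (hu.comp b hz :)
  have hvz : ContDiffAt ℝ 2 (fun t => v a t) b := (hv.comp b hz :)
  rw [lap, deriv_deriv_sub hux hvx, deriv_deriv_sub huz hvz, lap, lap]
  ring

theorem lap_const_mul (c : ℝ) (u : ℝ → ℝ → ℝ) (a b : ℝ) :
    lap (fun x z => c * u x z) a b = c * lap u a b := by
  simp only [lap, deriv_const_mul_field']
  ring

theorem hasDerivAt_sqrt_sq_add {c t : ℝ} (h : 0 < t ^ 2 + c) :
    HasDerivAt (fun t => √(t ^ 2 + c)) (t / √(t ^ 2 + c)) t := by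
  have := ((hasDerivAt_pow 2 t).add_const c).sqrt h.ne'
  convert this using 1
  field_simp
  ring

theorem deriv_deriv_comp_sqrt_sq_add {f : ℝ → ℝ} (hf : ContDiff ℝ 2 f) {c t : ℝ}
    (h : 0 < t ^ 2 + c) :
    deriv (deriv fun t => f √(t ^ 2 + c)) t =
      deriv (deriv f) √(t ^ 2 + c) * (t / √(t ^ 2 + c)) ^ 2 +
        deriv f √(t ^ 2 + c) * (c / √(t ^ 2 + c) ^ 3) := by
  have hpos : ∀ᶠ t' in 𝓝 t, 0 < t' ^ 2 + c :=
    (continuous_id.pow 2 |>.add continuous_const).continuousAt.eventually (lt_mem_nhds h)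
  have hderiv : deriv (fun t => f √(t ^ 2 + c)) =ᶠ[𝓝 t]
      fun t => deriv f √(t ^ 2 + c) * (t / √(t ^ 2 + c)) :=
    hpos.mono fun t' ht' =>
      ((hf.differentiable two_ne_zero _).hasDerivAt.comp t' (hasDerivAt_sqrt_sq_add ht')).deriv
  have hs := hasDerivAt_sqrt_sq_add h
  have hs0 : √(t ^ 2 + c) ≠ 0 := (Real.sqrt_pos.2 h).ne'
  have hs2 : √(t ^ 2 + c) ^ 2 = t ^ 2 + c := Real.sq_sqrt h.le
  rw [hderiv.deriv_eq]
  refine (((hf.differentiable_deriv_two _).hasDerivAt.comp t hs).mul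
    ((hasDerivAt_id' t).div hs hs0)).deriv.trans ?_
  simp only [Function.comp_apply, Pi.div_apply]
  field_simp
  linear_combination (deriv f √(t ^ 2 + c)) * hs2

theorem lap_comp_sqrt {f : ℝ → ℝ} (hf : ContDiff ℝ 2 f) {a b : ℝ} (h : 0 < a ^ 2 + b ^ 2) :
    lap (fun x z => f √(x ^ 2 + z ^ 2)) a b =
      deriv (deriv f) √(a ^ 2 + b ^ 2) + deriv f √(a ^ 2 + b ^ 2) / √(a ^ 2 + b ^ 2) := by
  have hz : (fun z => f √(a ^ 2 + z ^ 2)) = fun z => f √(z ^ 2 + a ^ 2) := by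
    simp_rw [add_comm (a ^ 2)]
  have h' : 0 < b ^ 2 + a ^ 2 := by linarith
  rw [lap, hz, deriv_deriv_comp_sqrt_sq_add hf h, deriv_deriv_comp_sqrt_sq_add hf h',
    add_comm (b ^ 2)]
  have hs0 : √(a ^ 2 + b ^ 2) ≠ 0 := (Real.sqrt_pos.2 h).ne'
  have hs2 : √(a ^ 2 + b ^ 2) ^ 2 = a ^ 2 + b ^ 2 := Real.sq_sqrt h.le
  set s := √(a ^ 2 + b ^ 2)
  calc _ = deriv (deriv f) s * ((a ^ 2 + b ^ 2) / s ^ 2) +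
        deriv f s * ((a ^ 2 + b ^ 2) / s ^ 3) := by ring
    _ = _ := by rw [← hs2]; field_simp

theorem lap_exp_neg_mul_sqrt (σ : ℝ) {a b : ℝ} (h : 0 < a ^ 2 + b ^ 2) :
    lap (fun x z => Real.exp (-σ * √(x ^ 2 + z ^ 2))) a b =
      (σ ^ 2 - σ / √(a ^ 2 + b ^ 2)) * Real.exp (-σ * √(a ^ 2 + b ^ 2)) := by
  have hd : deriv (fun r => Real.exp (-σ * r)) = fun r => -σ * Real.exp (-σ * r) := by
    funext r
    simpa [mul_comm] using (((hasDerivAt_id r).const_mul (-σ)).exp).deriv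
  refine (lap_comp_sqrt (f := fun r => Real.exp (-σ * r)) (by fun_prop) h).trans ?_
  rw [hd, deriv_const_mul_field', hd]
  ring

theorem isCompact_sqrt_sq_add_sq_le (ρ : ℝ) :
    IsCompact {p : ℝ × ℝ | √(p.1 ^ 2 + p.2 ^ 2) ≤ ρ} := by
  refine (isCompact_closedBall (0 : ℝ × ℝ) ρ).of_isClosed_subset
    (isClosed_le (by fun_prop) continuous_const) fun p hp => ?_
  rw [mem_closedBall_zero_iff, Prod.norm_def, Real.norm_eq_abs, Real.norm_eq_abs]
  exact max_le ((Real.abs_le_sqrt (by nlinarith)).trans hp)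
    ((Real.abs_le_sqrt (by nlinarith)).trans hp)

theorem exists_isLocalMax_of_nonpos_of_decay {X : Type*} [TopologicalSpace X] {w r : X → ℝ}
    {R : ℝ} (hw : Continuous w) (hr : Continuous r) (hK : ∀ ρ, IsCompact {p | r p ≤ ρ})
    (hbdry : ∀ p, r p = R → w p ≤ 0) (hdecay : ∀ ε > 0, ∃ ρ, ∀ p, ρ ≤ r p → w p ≤ ε)
    {p₀ : X} (hp₀ : R ≤ r p₀) (hpos : 0 < w p₀) :
    ∃ q, R < r q ∧ IsLocalMax w q ∧ w p₀ ≤ w q := by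
  obtain ⟨ρ₀, hρ₀⟩ := hdecay (w p₀ / 2) (half_pos hpos)
  have hK' : IsCompact (r ⁻¹' Icc R (max ρ₀ (r p₀))) :=
    (hK _).of_isClosed_subset (isClosed_Icc.preimage hr) fun _ hp => hp.2
  have hp₀K : p₀ ∈ r ⁻¹' Icc R (max ρ₀ (r p₀)) := ⟨hp₀, le_max_right _ _⟩
  obtain ⟨q, ⟨hqR, hqρ⟩, hqmax⟩ := hK'.exists_isMaxOn ⟨p₀, hp₀K⟩ hw.continuousOn
  have hle : w p₀ ≤ w q := hqmax hp₀K
  have hqR' : R < r q := hqR.lt_of_ne fun h => by linarith [hbdry q h.symm]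
  have hqρ' : r q < max ρ₀ (r p₀) :=
    hqρ.lt_of_ne fun h => by linarith [hρ₀ q (h ▸ le_max_left _ _)]
  refine ⟨q, hqR', ?_, hle⟩
  filter_upwards [(isOpen_Ioo.preimage hr).mem_nhds ⟨hqR', hqρ'⟩] with p hp
  exact hqmax (Ioo_subset_Icc_self hp)

theorem not_isLocalMax_sub_mul_exp_neg_mul_sqrt {ψ V : ℝ → ℝ → ℝ} {σ M a b : ℝ} (hσ : 0 ≤ σ)
    (hM : 0 ≤ M) (hab : 0 < a ^ 2 + b ^ 2)
    (hψ : ContDiffAt ℝ 2 (fun p : ℝ × ℝ => ψ p.1 p.2) (a, b))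
    (heq : lap ψ a b - ψ a b + V a b * ψ a b = 0) (hV : σ ^ 2 < 1 - V a b)
    (hgt : M * Real.exp (-σ * √(a ^ 2 + b ^ 2)) < ψ a b) :
    ¬IsLocalMax (fun p : ℝ × ℝ => ψ p.1 p.2 - M * Real.exp (-σ * √(p.1 ^ 2 + p.2 ^ 2))) (a, b) := by
  intro hmax
  have hr : ContDiffAt ℝ 2 (fun p : ℝ × ℝ => √(p.1 ^ 2 + p.2 ^ 2)) (a, b) :=
    ContDiffAt.sqrt (by fun_prop) hab.ne'
  have hbar :
      ContDiffAt ℝ 2 (fun p : ℝ × ℝ => M * Real.exp (-σ * √(p.1 ^ 2 + p.2 ^ 2))) (a, b) := by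
    fun_prop
  have hlap := lap_nonpos_of_isLocalMax
    (u := fun x z => ψ x z - M * Real.exp (-σ * √(x ^ 2 + z ^ 2))) hmax
    (hψ.continuousAt.sub hbar.continuousAt)
  rw [lap_sub (v := fun x z => M * Real.exp (-σ * √(x ^ 2 + z ^ 2))) hψ hbar, lap_const_mul,
    lap_exp_neg_mul_sqrt σ hab] at hlap
  have hs : 0 < √(a ^ 2 + b ^ 2) := Real.sqrt_pos.2 hab
  have hE := Real.exp_pos (-σ * √(a ^ 2 + b ^ 2))
  set s := √(a ^ 2 + b ^ 2)
  set E := Real.exp (-σ * s)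
  have hME : 0 ≤ M * E := mul_nonneg hM hE.le
  have hσs : 0 ≤ M * E * (σ / s) := mul_nonneg hME (by positivity)
  have hbarrier_lt : M * ((σ ^ 2 - σ / s) * E) < lap ψ a b := calc
    M * ((σ ^ 2 - σ / s) * E) ≤ σ ^ 2 * (M * E) := by linarith
    _ ≤ (1 - V a b) * (M * E) := mul_le_mul_of_nonneg_right hV.le hME
    _ < (1 - V a b) * ψ a b := mul_lt_mul_of_pos_left hgt (hV.trans_le' (sq_nonneg σ))
    _ = lap ψ a b := by linear_combination -heq
  linarith

theorem stmt17_general (σ R M : ℝ) (hσ0 : 0 < σ) (hσ1 : σ < 1) (hR : 0 < R)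
    (V : ℝ → ℝ → ℝ)
    (hV : ∀ x z, R ≤ Real.sqrt (x ^ 2 + z ^ 2) →
      0 ≤ V x z ∧ V x z < (1 - σ ^ 2) / 2)
    (φ : ℝ → ℝ → ℝ) (hφ2 : ContDiff ℝ 2 fun p : ℝ × ℝ => φ p.1 p.2)
    (heq : ∀ x z, R < Real.sqrt (x ^ 2 + z ^ 2) →
      lap φ x z - φ x z + V x z * φ x z = 0)
    (hbd : ∀ x z, Real.sqrt (x ^ 2 + z ^ 2) = R → |φ x z| ≤ M * Real.exp (-σ * R))
    (hdecay : ∀ ε > 0, ∃ ρ, ∀ x z, ρ ≤ Real.sqrt (x ^ 2 + z ^ 2) → |φ x z| ≤ ε) :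
    ∀ x z, R ≤ Real.sqrt (x ^ 2 + z ^ 2) →
      |φ x z| ≤ M * Real.exp (-σ * Real.sqrt (x ^ 2 + z ^ 2)) := by
  intro x z hxz
  by_contra! hcon
  have hM : 0 ≤ M := by
    have h := (abs_nonneg _).trans (hbd R 0 (by simp [Real.sqrt_sq hR.le]))
    exact nonneg_of_mul_nonneg_left h (Real.exp_pos _)
  obtain ⟨⟨a, b⟩, hRab, hmax, hle⟩ := exists_isLocalMax_of_nonpos_of_decay
    (w := fun p : ℝ × ℝ => |φ p.1 p.2| - M * Real.exp (-σ * √(p.1 ^ 2 + p.2 ^ 2)))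
    (r := fun p : ℝ × ℝ => √(p.1 ^ 2 + p.2 ^ 2)) (p₀ := (x, z))
    (by fun_prop) (by fun_prop) isCompact_sqrt_sq_add_sq_le
    (fun p hp => by rw [hp]; linarith [hbd p.1 p.2 hp])
    (fun ε hε => (hdecay ε hε).imp fun ρ hρ p hp => by
      have : 0 ≤ M * Real.exp (-σ * √(p.1 ^ 2 + p.2 ^ 2)) := by positivity
      linarith [hρ p.1 p.2 hp])
    hxz (by linarith)
  obtain ⟨c, hc, hcφ⟩ : ∃ c : ℝ, |c| = 1 ∧ c * φ a b = |φ a b| := by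
    rcases abs_choice (φ a b) with h | h
    exacts [⟨1, by simp, by simp [h]⟩, ⟨-1, by simp, by simp [h]⟩]
  have hσV : σ ^ 2 < 1 - V a b := by
    linarith [(hV a b hRab.le).2, pow_lt_one₀ hσ0.le hσ1 two_ne_zero]
  refine not_isLocalMax_sub_mul_exp_neg_mul_sqrt (ψ := fun x z => c * φ x z) hσ0.le hM
    (Real.sqrt_pos.1 (hR.trans hRab)) (by fun_prop) ?_ hσV ?_ ?_
  · rw [lap_const_mul]
    linear_combination c * heq a b hRab
  · simp only at hle ⊢
    linarith
  · refine hmax.mono fun p hp => ?_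
    have : c * φ p.1 p.2 ≤ |φ p.1 p.2| := by
      simpa [abs_mul, hc] using le_abs_self (c * φ p.1 p.2)
    simp only at hp ⊢
    linarith

/-- Maximum-principle exponential decay estimate on an exterior domain. -/
theorem stmt17 (σ R M : ℝ) (hσ0 : 0 < σ) (hσ1 : σ < 1) (hR : 0 < R)
    (V : ℝ → ℝ → ℝ) (hVc : Continuous fun p : ℝ × ℝ => V p.1 p.2)
    (hV : ∀ x z, R ≤ Real.sqrt (x ^ 2 + z ^ 2) →
      0 ≤ V x z ∧ V x z < (1 - σ ^ 2) / 2)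
    (φ : ℝ → ℝ → ℝ) (hφ2 : ContDiff ℝ 2 fun p : ℝ × ℝ => φ p.1 p.2)
    (hφb : ∃ M₀, ∀ x z, |φ x z| ≤ M₀)
    (heq : ∀ x z, R < Real.sqrt (x ^ 2 + z ^ 2) →
      lap φ x z - φ x z + V x z * φ x z = 0)
    (hbd : ∀ x z, Real.sqrt (x ^ 2 + z ^ 2) = R → |φ x z| ≤ M * Real.exp (-σ * R))
    (hdecay : ∀ ε > 0, ∃ ρ, ∀ x z, ρ ≤ Real.sqrt (x ^ 2 + z ^ 2) → |φ x z| ≤ ε) :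
    ∀ x z, R ≤ Real.sqrt (x ^ 2 + z ^ 2) →
      |φ x z| ≤ M * Real.exp (-σ * Real.sqrt (x ^ 2 + z ^ 2)) :=
  stmt17_general σ R M hσ0 hσ1 hR V hV φ hφ2 heq hbd hdecay
end
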